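/- arXiv:2506.20317 — 2 statements merged into one kernel-verified Lean document; each statement's English description precedes it below -/
import Mathlib

section
/- For every integer n ≥ 2 and every real ε > 0, there exists a multi-graph instance with n agents whose valuations are all subadditive such that no allocation X satisfies v_i(X_i) ≥ (1/2 + ε)·μ_i^n for all agents i; that is, a (1/2 + ε)-MMS allocation is not guaranteed to exist for n subadditive agents. -/
open Finset

/-- A multi-graph fair-division instance: agents `V` (vertices), items `E` (edges of a
multi-graph on `V`), an endpoint map assigning to each item an unordered pair of agents
(self-loops allowed), and for each agent a nonnegative, normalized, monotone, graphical
valuation on sets of items. -/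
structure GraphInstance (V E : Type) [DecidableEq E] where
  ep : E → Sym2 V
  val : V → Finset E → ℝ
  val_nonneg : ∀ i S, 0 ≤ val i S
  val_empty : ∀ i, val i ∅ = 0
  val_mono : ∀ i ⦃S T : Finset E⦄, S ⊆ T → val i S ≤ val i T
  graphical : ∀ i e, i ∉ ep e → ∀ S : Finset E, val i (insert e S) = val i S

variable {V E : Type}

/-- `P` is a partition of `F` into `d` (possibly empty) parts. -/
def IsPartitionInto [DecidableEq E] (d : ℕ) (P : Fin d → Finset E) (F : Finset E) : Prop :=
  (∀ s t : Fin d, s ≠ t → Disjoint (P s) (P t)) ∧ Finset.univ.biUnion P = F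

/-- The `1`-out-of-`d` maximin share value `μ^d(F)` of a valuation `v` on ground set `F`:
the maximum, over all partitions of `F` into `d` (possibly empty) parts, of the minimum
value of a part. -/
noncomputable def mms [DecidableEq E] (v : Finset E → ℝ) (d : ℕ) (F : Finset E) : ℝ :=
  sSup {x | ∃ P : Fin d → Finset E, IsPartitionInto d P F ∧ x = ⨅ t, v (P t)}

/-- An allocation: a family of pairwise disjoint bundles. -/
def IsAllocation [DecidableEq E] (X : V → Finset E) : Prop :=
  ∀ i j : V, i ≠ j → Disjoint (X i) (X j)

/-- An orientation: an allocation in which every item is given to one of its endpoints. -/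
def IsOrientation [DecidableEq E] (I : GraphInstance V E) (X : V → Finset E) : Prop :=
  IsAllocation X ∧ ∀ e : E, ∃ i, i ∈ I.ep e ∧ e ∈ X i

/-- Additive valuation. -/
def IsAdditiveVal [DecidableEq E] (v : Finset E → ℝ) : Prop :=
  ∀ S : Finset E, v S = ∑ e ∈ S, v {e}

/-- XOS (fractionally subadditive) valuation: the pointwise maximum of finitely many
additive functions with nonnegative singleton values. -/
def IsXOSVal [DecidableEq E] (v : Finset E → ℝ) : Prop :=
  ∃ (A : Finset (E → ℝ)) (hA : A.Nonempty),
    (∀ a ∈ A, ∀ e, 0 ≤ a e) ∧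
    ∀ S : Finset E, v S = A.sup' hA fun a => ∑ e ∈ S, a e

/-- Subadditive valuation. -/
def IsSubadditiveVal [DecidableEq E] (v : Finset E → ℝ) : Prop :=
  ∀ S T : Finset E, v (S ∪ T) ≤ v S + v T

/-- The PMMS threshold of agent `i` under allocation `X`:
`PMMS_i(X) = max_{j ≠ i} μ_i^2(X_i ∪ X_j)`. -/
noncomputable def pmmsVal [DecidableEq E] (I : GraphInstance V E) (X : V → Finset E)
    (i : V) : ℝ :=
  sSup {x | ∃ j : V, j ≠ i ∧ x = mms (I.val i) 2 (X i ∪ X j)}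

/-- A canonical 1-out-of-`d` MMS partition of the full ground set for valuation `v`:
a partition into `d` parts whose minimum part value equals `μ^d`. -/
def IsCanonicalPartition [DecidableEq E] [Fintype E] (v : Finset E → ℝ) (d : ℕ)
    (B : Fin d → Finset E) : Prop :=
  IsPartitionInto d B Finset.univ ∧ (⨅ t, v (B t)) = mms v d Finset.univ

/-!
Split `n²` items, arranged in an `n × n` grid, between two agents `a` and `b` (all items are
parallel edges `ab`; every other agent values nothing). Agent `a` values a bundle at `1` if it
contains a full row, at `1/2` if it is merely nonempty; agent `b` does the same with columns.
Both valuations are subadditive, and the rows (resp. columns) show that both maximin shares are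
`1`. A `(1/2 + ε)`-MMS allocation would give `a` a full row and `b` a full column, but every row
meets every column.
-/

section BlockValuation

variable {ι : Type}

open Classical in
noncomputable def blockVal (B : ι → Finset E) (S : Finset E) : ℝ :=
  if ∃ r, B r ⊆ S then 1 else if S.Nonempty then 1 / 2 else 0

variable (B : ι → Finset E)

lemma blockVal_nonneg (S : Finset E) : 0 ≤ blockVal B S := by
  unfold blockVal; split_ifs <;> norm_num

lemma blockVal_block (r : ι) : blockVal B (B r) = 1 :=
  if_pos ⟨r, subset_rfl⟩

lemma blockVal_empty (hB : ∀ r, (B r).Nonempty) : blockVal B ∅ = 0 := by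
  have : ¬ ∃ r, B r ⊆ ∅ := fun ⟨r, hr⟩ => (hB r).ne_empty (subset_empty.1 hr)
  rw [blockVal, if_neg this, if_neg Finset.not_nonempty_empty]

lemma blockVal_mono : Monotone (blockVal B) := by
  intro S T hST
  unfold blockVal
  by_cases hS : ∃ r, B r ⊆ S
  · obtain ⟨r, hr⟩ := hS
    rw [if_pos ⟨r, hr⟩, if_pos ⟨r, hr.trans hST⟩]
  · rw [if_neg hS]
    split_ifs with hSne _ hTne <;> try norm_num
    exact absurd (hSne.mono hST) hTne

lemma blockVal_subadditive [DecidableEq E] : IsSubadditiveVal (blockVal B) := by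
  intro S T
  rcases S.eq_empty_or_nonempty with rfl | hS
  · rw [empty_union]; exact le_add_of_nonneg_left (blockVal_nonneg B _)
  rcases T.eq_empty_or_nonempty with rfl | hT
  · rw [union_empty]; exact le_add_of_nonneg_right (blockVal_nonneg B _)
  unfold blockVal
  rw [if_pos hS, if_pos hT]
  split_ifs <;> norm_num

variable {B}

lemma exists_block_subset_of_half_lt_blockVal {S : Finset E} (h : 1 / 2 < blockVal B S) :
    ∃ r, B r ⊆ S := by
  by_contra hS
  unfold blockVal at h
  rw [if_neg hS] at h
  split_ifs at h <;> norm_num at h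

lemma blockVal_le_half_of_crossing {κ : Type} {C : κ → Finset E}
    (hBC : ∀ r c, ¬ Disjoint (B r) (C c)) {X Y : Finset E} (hXY : Disjoint X Y) :
    blockVal B X ≤ 1 / 2 ∨ blockVal C Y ≤ 1 / 2 := by
  by_contra! h
  obtain ⟨r, hr⟩ := exists_block_subset_of_half_lt_blockVal h.1
  obtain ⟨c, hc⟩ := exists_block_subset_of_half_lt_blockVal h.2
  exact hBC r c (hXY.mono hr hc)

end BlockValuation

section MaximinShare

variable [DecidableEq E] [Fintype E]

lemma iInf_le_mms {v : Finset E → ℝ} {d : ℕ} [NeZero d] {P : Fin d → Finset E}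
    {F : Finset E} (hP : IsPartitionInto d P F) : ⨅ t, v (P t) ≤ mms v d F := by
  obtain ⟨C, hC⟩ := (Set.finite_range v).bddAbove
  refine le_csSup ⟨C, ?_⟩ ⟨P, hP, rfl⟩
  rintro x ⟨Q, -, rfl⟩
  exact (ciInf_le (Set.finite_range _).bddBelow 0).trans (hC ⟨Q 0, rfl⟩)

lemma one_le_mms_blockVal {d : ℕ} [NeZero d] {B : Fin d → Finset E}
    (hB : IsPartitionInto d B univ) : 1 ≤ mms (blockVal B) d univ := by
  simpa [blockVal_block] using iInf_le_mms (v := blockVal B) hB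

lemma isPartitionInto_fibers {d : ℕ} (f : E → Fin d) :
    IsPartitionInto d (fun t => univ.filter (f · = t)) univ := by
  refine ⟨fun s t hst => disjoint_left.2 fun e hs ht => hst ?_, ?_⟩
  · simp only [mem_filter, mem_univ, true_and] at hs ht
    exact hs.symm.trans ht
  · ext e
    simp

end MaximinShare

section CrossingInstance

variable [DecidableEq V] [DecidableEq E] {ι κ : Type}

noncomputable def crossingInstance (a b : V) (B : ι → Finset E) (C : κ → Finset E)
    (hB : ∀ r, (B r).Nonempty) (hC : ∀ c, (C c).Nonempty) : GraphInstance V E where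
  ep _ := s(a, b)
  val i := if i = a then blockVal B else if i = b then blockVal C else 0
  val_nonneg i S := by
    split_ifs
    exacts [blockVal_nonneg B S, blockVal_nonneg C S, le_rfl]
  val_empty i := by
    split_ifs
    exacts [blockVal_empty B hB, blockVal_empty C hC, rfl]
  val_mono i S T hST := by
    split_ifs
    exacts [blockVal_mono B hST, blockVal_mono C hST, le_rfl]
  graphical i e hi S := by
    obtain ⟨hia, hib⟩ : i ≠ a ∧ i ≠ b := by simpa [Sym2.mem_iff, not_or] using hi
    simp [hia, hib]

variable {a b : V}

section

variable {B : ι → Finset E} {C : κ → Finset E} {hB : ∀ r, (B r).Nonempty}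
  {hC : ∀ c, (C c).Nonempty}

lemma crossingInstance_val_left :
    (crossingInstance a b B C hB hC).val a = blockVal B := if_pos rfl

lemma crossingInstance_val_right (hab : a ≠ b) :
    (crossingInstance a b B C hB hC).val b = blockVal C := by
  simp [crossingInstance, hab.symm]

lemma crossingInstance_subadditive (i : V) :
    IsSubadditiveVal ((crossingInstance a b B C hB hC).val i) := by
  simp only [crossingInstance]
  split_ifs
  exacts [blockVal_subadditive B, blockVal_subadditive C, fun _ _ => by simp]

end

lemma crossingInstance_not_exists_mms_allocation [Fintype E] {d : ℕ} [NeZero d]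
    {B C : Fin d → Finset E} {hB : ∀ r, (B r).Nonempty} {hC : ∀ c, (C c).Nonempty}
    (hab : a ≠ b) (hBpart : IsPartitionInto d B univ) (hCpart : IsPartitionInto d C univ)
    (hBC : ∀ r c, ¬ Disjoint (B r) (C c)) {ε : ℝ} (hε : 0 < ε) :
    ¬ ∃ X : V → Finset E, IsAllocation X ∧ ∀ i,
      (1 / 2 + ε) * mms ((crossingInstance a b B C hB hC).val i) d univ ≤
        (crossingInstance a b B C hB hC).val i (X i) := by
  rintro ⟨X, hX, hMMS⟩
  have hgt {D : Fin d → Finset E} (hD : IsPartitionInto d D univ) {S : Finset E}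
      (h : (1 / 2 + ε) * mms (blockVal D) d univ ≤ blockVal D S) : 1 / 2 < blockVal D S := by
    nlinarith [one_le_mms_blockVal hD]
  have ha := hMMS a
  have hb := hMMS b
  rw [crossingInstance_val_left] at ha
  rw [crossingInstance_val_right hab] at hb
  rcases blockVal_le_half_of_crossing hBC (hX a b hab) with h | h
  · exact h.not_gt (hgt hBpart ha)
  · exact h.not_gt (hgt hCpart hb)

end CrossingInstance

section Grid

def gridRow (n : ℕ) (r : Fin n) : Finset (Fin (n * n)) :=
  univ.filter fun e => (finProdFinEquiv.symm e).1 = r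

def gridCol (n : ℕ) (c : Fin n) : Finset (Fin (n * n)) :=
  univ.filter fun e => (finProdFinEquiv.symm e).2 = c

lemma mem_gridRow_gridCol {n : ℕ} (r c : Fin n) :
    finProdFinEquiv (r, c) ∈ gridRow n r ∧ finProdFinEquiv (r, c) ∈ gridCol n c := by
  simp only [gridRow, gridCol, mem_filter, mem_univ, true_and, Equiv.symm_apply_apply]

lemma gridRow_not_disjoint_gridCol {n : ℕ} (r c : Fin n) :
    ¬ Disjoint (gridRow n r) (gridCol n c) := fun h =>
  disjoint_left.1 h (mem_gridRow_gridCol r c).1 (mem_gridRow_gridCol r c).2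

end Grid

/-- For every `n ≥ 2` and real `ε > 0`, there exists a multi-graph
instance with `n` subadditive agents such that no allocation `X` satisfies
`v_i(X_i) ≥ (1/2 + ε)·μ_i^n` for all agents `i`. -/
theorem stmt18 (n : ℕ) (hn : 2 ≤ n) (ε : ℝ) (hε : 0 < ε) :
    ∃ (m : ℕ) (I : GraphInstance (Fin n) (Fin m)),
      (∀ i, IsSubadditiveVal (I.val i)) ∧
      ¬ ∃ X : Fin n → Finset (Fin m), IsAllocation X ∧
        ∀ i, (1 / 2 + ε) * mms (I.val i) n Finset.univ ≤ I.val i (X i) := by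
  have : NeZero n := ⟨by omega⟩
  have hab : (⟨0, by omega⟩ : Fin n) ≠ ⟨1, by omega⟩ := by simp
  exact ⟨n * n,
    crossingInstance _ _ (gridRow n) (gridCol n)
      (fun r => ⟨_, (mem_gridRow_gridCol r 0).1⟩) (fun c => ⟨_, (mem_gridRow_gridCol 0 c).2⟩),
    crossingInstance_subadditive,
    crossingInstance_not_exists_mms_allocation hab (isPartitionInto_fibers _)
      (isPartitionInto_fibers _) gridRow_not_disjoint_gridCol hε⟩
end

section
/- In every multi-graph instance with n ≥ 2 agents whose valuations are all subadditive, there exists an orientation X with v_i(X_i) ≥ (1/2)·PMMS_i(X) for every agent i, i.e., a 1/2-PMMS orientation. -/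
open Finset

variable {V E : Type}

/-!
Order the agents. For each pair `a ≤ b`, agent `a` cuts the items between `a` and `b` into two
parts attaining its value `μ_a²` of these items, and `b` takes the part it prefers.
Fix agents `i ≠ j`. Subadditivity gives `μ_i²(X_i ∪ X_j) ≤ v_i(X_i) + μ_i²(X_j)`, and since `v_i` is
graphical only the items of `X_j` between `i` and `j` matter for `μ_i²(X_j)`. If `i` was the cutter,
these items lie in the part `j` took, so their `μ_i²` is at most `μ_i²` of all items between `i`
and `j`, which `i` secured with the part it kept. If `i` was the chooser, they lie in the part `i`
rejected, which it values at most as much as the part it took. Either way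
`μ_i²(X_j) ≤ v_i(X_i)`, so `PMMS_i(X) ≤ 2 v_i(X_i)`.
-/

namespace Sym2

variable {α : Type*} [LinearOrder α]

theorem mk_inf_sup (s : Sym2 α) : s(s.inf, s.sup) = s :=
  sortEquiv.symm_apply_apply s

theorem inf_mem (s : Sym2 α) : s.inf ∈ s := by
  simpa only [mk_inf_sup] using mem_mk_left s.inf s.sup

theorem sup_mem (s : Sym2 α) : s.sup ∈ s := by
  simpa only [mk_inf_sup] using mem_mk_right s.inf s.sup

end Sym2

section Partition

variable [DecidableEq E] {d : ℕ} {P : Fin d → Finset E} {F : Finset E}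

theorem IsPartitionInto.subset (hP : IsPartitionInto d P F) (t : Fin d) : P t ⊆ F :=
  hP.2 ▸ subset_biUnion_of_mem P (mem_univ t)

theorem IsPartitionInto.filter (hP : IsPartitionInto d P F) (p : E → Prop) [DecidablePred p] :
    IsPartitionInto d (fun t => (P t).filter p) (F.filter p) :=
  ⟨fun s t hst => (hP.1 s t hst).mono (filter_subset _ _) (filter_subset _ _),
    by rw [← hP.2, filter_biUnion]⟩

theorem isPartitionInto_empty : IsPartitionInto d (fun _ => ∅) (∅ : Finset E) :=
  ⟨fun _ _ _ => disjoint_empty_left _, by ext; simp⟩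

theorem IsPartitionInto.update_union (hP : IsPartitionInto d P F) {S : Finset E}
    (hS : Disjoint F S) (t₀ : Fin d) :
    IsPartitionInto d (Function.update P t₀ (P t₀ ∪ S)) (F ∪ S) := by
  have hPS : ∀ t, Disjoint (P t) S := fun t => hS.mono_left (hP.subset t)
  refine ⟨fun s t hst => ?_, ?_⟩
  · rcases eq_or_ne s t₀ with rfl | hs
    · simpa [hst.symm] using ⟨hP.1 _ _ hst, (hPS t).symm⟩
    rcases eq_or_ne t t₀ with rfl | ht
    · simpa [hs] using ⟨hP.1 _ _ hst, hPS s⟩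
    · simpa [hs, ht] using hP.1 _ _ hst
  · rw [← hP.2]
    ext e
    simp only [mem_biUnion, mem_univ, true_and, mem_union, Function.update_apply]
    constructor
    · rintro ⟨t, ht⟩
      split_ifs at ht with h
      · exact (mem_union.1 ht).imp (fun he => ⟨t₀, he⟩) id
      · exact Or.inl ⟨t, ht⟩
    · rintro (⟨t, ht⟩ | he)
      · refine ⟨t, ?_⟩
        split_ifs with h
        · exact h ▸ mem_union_left _ ht
        · exact ht
      · exact ⟨t₀, by simp [he]⟩

theorem isPartitionInto_two_iff {P : Fin 2 → Finset E} :
    IsPartitionInto 2 P F ↔ Disjoint (P 0) (P 1) ∧ P 0 ∪ P 1 = F := by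
  have hunion : univ.biUnion P = P 0 ∪ P 1 := by
    ext e
    simp [Fin.exists_fin_two]
  simp [IsPartitionInto, Fin.forall_fin_two, disjoint_comm, hunion]

end Partition

section MaximinShare

variable [DecidableEq E] {v : Finset E → ℝ} {d : ℕ} {P : Fin d → Finset E} {F G : Finset E}

theorem iInf_le_of_isPartitionInto (h0 : ∀ S, 0 ≤ v S) (hv : Monotone v)
    (hP : IsPartitionInto d P F) : ⨅ t, v (P t) ≤ v F := by
  rcases isEmpty_or_nonempty (Fin d) with _ | ⟨⟨t⟩⟩
  · simpa only [Real.iInf_of_isEmpty] using h0 F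
  · exact (ciInf_le (Finite.bddBelow_range _) t).trans (hv (hP.subset t))

theorem le_mms (h0 : ∀ S, 0 ≤ v S) (hv : Monotone v) (hP : IsPartitionInto d P F) :
    ⨅ t, v (P t) ≤ mms v d F := by
  refine le_csSup ⟨v F, ?_⟩ ⟨P, hP, rfl⟩
  rintro _ ⟨Q, hQ, rfl⟩
  exact iInf_le_of_isPartitionInto h0 hv hQ

theorem mms_le {a : ℝ} (ha : 0 ≤ a) (h : ∀ P, IsPartitionInto d P F → ⨅ t, v (P t) ≤ a) :
    mms v d F ≤ a :=
  Real.sSup_le (by rintro _ ⟨P, hP, rfl⟩; exact h P hP) ha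

theorem mms_nonneg (h0 : ∀ S, 0 ≤ v S) : 0 ≤ mms v d F :=
  Real.sSup_nonneg (by rintro _ ⟨P, -, rfl⟩; exact Real.iInf_nonneg fun t => h0 _)

theorem mms_le_val (h0 : ∀ S, 0 ≤ v S) (hv : Monotone v) : mms v d F ≤ v F :=
  mms_le (h0 F) fun _ => iInf_le_of_isPartitionInto h0 hv

theorem mms_mono [NeZero d] (h0 : ∀ S, 0 ≤ v S) (hv : Monotone v) (hFG : F ⊆ G) :
    mms v d F ≤ mms v d G := by
  refine mms_le (mms_nonneg h0) fun P hP => ?_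
  have hQ := hP.update_union (disjoint_sdiff (t := G)) 0
  rw [union_sdiff_of_subset hFG] at hQ
  have hPQ : ∀ t, P t ⊆ Function.update P 0 (P 0 ∪ (G \ F)) t := by
    intro t
    rcases eq_or_ne t 0 with rfl | ht
    · simp
    · simp [ht]
  exact (ciInf_mono (Finite.bddBelow_range _) fun t => hv (hPQ t)).trans (le_mms h0 hv hQ)

theorem mms_le_mms_filter (h0 : ∀ S, 0 ≤ v S) (hv : Monotone v) (p : E → Prop) [DecidablePred p]
    (hp : ∀ S, v (S.filter p) = v S) : mms v d F ≤ mms v d (F.filter p) :=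
  mms_le (mms_nonneg h0) fun P hP => by
    simpa only [hp] using le_mms h0 hv (hP.filter p)

theorem mms_union_le_add [NeZero d] (hsub : IsSubadditiveVal v) (h0 : ∀ S, 0 ≤ v S)
    (hv : Monotone v) (A B : Finset E) : mms v d (A ∪ B) ≤ v A + mms v d B := by
  refine mms_le (add_nonneg (h0 A) (mms_nonneg h0)) fun P hP => ?_
  have hPB : IsPartitionInto d (fun t => P t ∩ B) B := by
    simpa only [filter_mem_eq_inter, union_inter_cancel_right] using hP.filter (· ∈ B)
  have hpart : ∀ t, ⨅ s, v (P s) ≤ v A + v (P t ∩ B) := fun t =>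
    calc ⨅ s, v (P s) ≤ v (P t) := ciInf_le (Finite.bddBelow_range _) t
      _ = v (P t ∩ A ∪ P t ∩ B) := by
        rw [← inter_union_distrib_left, inter_eq_left.2 (hP.subset t)]
      _ ≤ v (P t ∩ A) + v (P t ∩ B) := hsub _ _
      _ ≤ v A + v (P t ∩ B) := by gcongr; exact hv inter_subset_right
  have hmmsB := le_mms h0 hv hPB
  have hinf := le_ciInf fun t => sub_le_iff_le_add'.2 (hpart t)
  linarith

theorem exists_isPartitionInto_iInf_eq_mms [Finite E] [NeZero d] (h0 : ∀ S, 0 ≤ v S)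
    (hv : Monotone v) (F : Finset E) :
    ∃ P, IsPartitionInto d P F ∧ ⨅ t, v (P t) = mms v d F := by
  have hne : {P | IsPartitionInto d P F}.Nonempty := by
    have h := isPartitionInto_empty.update_union (disjoint_empty_left F) (0 : Fin d)
    rw [empty_union] at h
    exact ⟨_, h⟩
  obtain ⟨P, hP, hmax⟩ := Set.exists_max_image _ (fun P => ⨅ t, v (P t)) (Set.toFinite _) hne
  exact ⟨P, hP, le_antisymm (le_mms h0 hv hP)
    (mms_le (Real.iInf_nonneg fun t => h0 _) hmax)⟩

end MaximinShare

theorem exists_cut_and_choose [DecidableEq E] [Finite E] {v : Finset E → ℝ}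
    (h0 : ∀ S, 0 ≤ v S) (hv : Monotone v) (w : Finset E → ℝ) (F : Finset E) :
    ∃ C K : Finset E, Disjoint C K ∧ C ∪ K = F ∧ mms v 2 F ≤ v K ∧ w K ≤ w C := by
  obtain ⟨P, hP, hmms⟩ := exists_isPartitionInto_iInf_eq_mms (d := 2) h0 hv F
  obtain ⟨hdisj, hunion⟩ := isPartitionInto_two_iff.1 hP
  have hle : ∀ t, mms v 2 F ≤ v (P t) := fun t => hmms ▸ ciInf_le (Finite.bddBelow_range _) t
  rcases le_total (w (P 1)) (w (P 0)) with h | h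
  · exact ⟨P 0, P 1, hdisj, hunion, hle 1, h⟩
  · exact ⟨P 1, P 0, hdisj.symm, union_comm (P 0) (P 1) ▸ hunion, hle 0, h⟩

namespace GraphInstance

variable [DecidableEq E] (I : GraphInstance V E)

theorem val_union_eq_of_forall_notMem_ep (i : V) (A : Finset E) {T : Finset E}
    (hT : ∀ e ∈ T, i ∉ I.ep e) : I.val i (A ∪ T) = I.val i A := by
  induction T using Finset.induction_on with
  | empty => rw [union_empty]
  | insert e T _ ih =>
    rw [union_insert, I.graphical i e (hT e (mem_insert_self e T)),
      ih fun e' he' => hT e' (mem_insert_of_mem he')]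

theorem val_filter_mem_ep [DecidableEq V] (i : V) (S : Finset E) :
    I.val i {e ∈ S | i ∈ I.ep e} = I.val i S := by
  conv_rhs => rw [← filter_union_filter_not_eq (i ∈ I.ep ·) S]
  exact (I.val_union_eq_of_forall_notMem_ep i _ fun e he => (mem_filter.1 he).2).symm

theorem pmmsVal_le {X : V → Finset E} {i : V} {a : ℝ} (ha : 0 ≤ a)
    (h : ∀ j, j ≠ i → mms (I.val i) 2 (X i ∪ X j) ≤ a) : pmmsVal I X i ≤ a :=
  Real.sSup_le (by rintro _ ⟨j, hj, rfl⟩; exact h j hj) ha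

section CutAndChoose

variable [LinearOrder V]

/-- For an item with endpoints `a ≤ b`, agent `a` has cut the items between `a` and `b` in two
and `b` has chosen the part `C a b`; the item goes to the agent holding its part. -/
def cutChooseOwner (C : V → V → Finset E) (e : E) : V :=
  if e ∈ C (I.ep e).inf (I.ep e).sup then (I.ep e).sup else (I.ep e).inf

variable {I} {C K : V → V → Finset E} {a b i j : V} {e : E}

theorem cutChooseOwner_mem_ep (C : V → V → Finset E) (e : E) :
    I.cutChooseOwner C e ∈ I.ep e := by
  unfold cutChooseOwner
  split_ifs
  exacts [Sym2.sup_mem _, Sym2.inf_mem _]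

theorem cutChooseOwner_of_ep_eq (hab : a ≤ b) (he : I.ep e = s(a, b)) :
    I.cutChooseOwner C e = if e ∈ C a b then b else a := by
  simp [cutChooseOwner, he, hab]

variable [Fintype E]

variable (I) in
def itemsBetween (a b : V) : Finset E := {e | I.ep e = s(a, b)}

variable (I) in
def cutChooseAlloc (C : V → V → Finset E) (i : V) : Finset E :=
  {e | I.cutChooseOwner C e = i}

theorem mem_itemsBetween : e ∈ I.itemsBetween a b ↔ I.ep e = s(a, b) := by
  simp [itemsBetween]

theorem mem_cutChooseAlloc : e ∈ I.cutChooseAlloc C i ↔ I.cutChooseOwner C e = i := by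
  simp [cutChooseAlloc]

theorem isOrientation_cutChooseAlloc (C : V → V → Finset E) :
    IsOrientation I (I.cutChooseAlloc C) :=
  ⟨fun _ _ hij => disjoint_left.2 fun _ hi hj =>
      hij ((mem_cutChooseAlloc.1 hi).symm.trans (mem_cutChooseAlloc.1 hj)),
    fun e => ⟨_, cutChooseOwner_mem_ep C e, mem_cutChooseAlloc.2 rfl⟩⟩

theorem ep_eq_of_mem_cutChooseAlloc (he : e ∈ I.cutChooseAlloc C j) (hi : i ∈ I.ep e)
    (hij : i ≠ j) : I.ep e = s(i, j) :=
  (Sym2.mem_and_mem_iff hij).1 ⟨hi, mem_cutChooseAlloc.1 he ▸ cutChooseOwner_mem_ep C e⟩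

theorem ep_eq_of_mem_union (hunion : C a b ∪ K a b = I.itemsBetween a b)
    (he : e ∈ C a b ∪ K a b) : I.ep e = s(a, b) :=
  mem_itemsBetween.1 (hunion ▸ he)

theorem chosen_subset_cutChooseAlloc (hab : a ≤ b)
    (hunion : C a b ∪ K a b = I.itemsBetween a b) : C a b ⊆ I.cutChooseAlloc C b :=
  fun e he => by
    have hep := ep_eq_of_mem_union hunion (mem_union_left _ he)
    rw [mem_cutChooseAlloc, cutChooseOwner_of_ep_eq hab hep, if_pos he]

theorem cut_subset_cutChooseAlloc (hab : a ≤ b) (hunion : C a b ∪ K a b = I.itemsBetween a b)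
    (hdisj : Disjoint (C a b) (K a b)) : K a b ⊆ I.cutChooseAlloc C a := fun e he => by
  have hep := ep_eq_of_mem_union hunion (mem_union_right _ he)
  rw [mem_cutChooseAlloc, cutChooseOwner_of_ep_eq hab hep, if_neg (disjoint_right.1 hdisj he)]

theorem filter_cutChooseAlloc_subset_chosen (hab : a < b) :
    {e ∈ I.cutChooseAlloc C b | a ∈ I.ep e} ⊆ C a b := fun e he => by
  obtain ⟨hown, ha⟩ := mem_filter.1 he
  have hep := ep_eq_of_mem_cutChooseAlloc hown ha hab.ne
  rw [mem_cutChooseAlloc, cutChooseOwner_of_ep_eq hab.le hep] at hown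
  by_contra hC
  rw [if_neg hC] at hown
  exact hab.ne hown

theorem filter_cutChooseAlloc_subset_cut (hab : a < b)
    (hunion : C a b ∪ K a b = I.itemsBetween a b) :
    {e ∈ I.cutChooseAlloc C a | b ∈ I.ep e} ⊆ K a b := fun e he => by
  obtain ⟨hown, hb⟩ := mem_filter.1 he
  have hep : I.ep e = s(a, b) := by
    rw [ep_eq_of_mem_cutChooseAlloc hown hb hab.ne', Sym2.eq_swap]
  rw [mem_cutChooseAlloc, cutChooseOwner_of_ep_eq hab.le hep] at hown
  have hC : e ∉ C a b := fun hC => by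
    rw [if_pos hC] at hown
    exact hab.ne' hown
  have hCK : e ∈ C a b ∪ K a b := by
    rw [hunion, mem_itemsBetween]
    exact hep
  exact (mem_union.1 hCK).resolve_left hC

theorem mms_cutChooseAlloc_le (hdisj : ∀ a b, Disjoint (C a b) (K a b))
    (hunion : ∀ a b, C a b ∪ K a b = I.itemsBetween a b)
    (hcut : ∀ a b, mms (I.val a) 2 (I.itemsBetween a b) ≤ I.val a (K a b))
    (hchoose : ∀ a b, I.val b (K a b) ≤ I.val b (C a b)) (hij : i ≠ j) :
    mms (I.val i) 2 (I.cutChooseAlloc C j) ≤ I.val i (I.cutChooseAlloc C i) := by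
  have h0 := I.val_nonneg i
  have hv : Monotone (I.val i) := I.val_mono i
  calc mms (I.val i) 2 (I.cutChooseAlloc C j)
      ≤ mms (I.val i) 2 {e ∈ I.cutChooseAlloc C j | i ∈ I.ep e} :=
        mms_le_mms_filter h0 hv _ (I.val_filter_mem_ep i)
    _ ≤ I.val i (I.cutChooseAlloc C i) := by
      rcases hij.lt_or_gt with hlt | hgt
      · -- `i` is the cutter for the items between `i` and `j`
        have hCij : C i j ⊆ I.itemsBetween i j := hunion i j ▸ subset_union_left
        calc _ ≤ mms (I.val i) 2 (I.itemsBetween i j) :=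
              mms_mono h0 hv ((filter_cutChooseAlloc_subset_chosen hlt).trans hCij)
          _ ≤ I.val i (K i j) := hcut i j
          _ ≤ _ := hv (cut_subset_cutChooseAlloc hlt.le (hunion i j) (hdisj i j))
      · -- `i` is the chooser for the items between `j` and `i`
        calc _ ≤ I.val i {e ∈ I.cutChooseAlloc C j | i ∈ I.ep e} := mms_le_val h0 hv
          _ ≤ I.val i (K j i) := hv (filter_cutChooseAlloc_subset_cut hgt (hunion j i))
          _ ≤ I.val i (C j i) := hchoose j i
          _ ≤ _ := hv (chosen_subset_cutChooseAlloc hgt.le (hunion j i))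

theorem pmmsVal_cutChooseAlloc_le (hsub : IsSubadditiveVal (I.val i))
    (hdisj : ∀ a b, Disjoint (C a b) (K a b))
    (hunion : ∀ a b, C a b ∪ K a b = I.itemsBetween a b)
    (hcut : ∀ a b, mms (I.val a) 2 (I.itemsBetween a b) ≤ I.val a (K a b))
    (hchoose : ∀ a b, I.val b (K a b) ≤ I.val b (C a b)) :
    pmmsVal I (I.cutChooseAlloc C) i ≤ 2 * I.val i (I.cutChooseAlloc C i) := by
  have h0 := I.val_nonneg i
  refine I.pmmsVal_le (by linarith [h0 (I.cutChooseAlloc C i)]) fun j hji => ?_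
  have := mms_cutChooseAlloc_le hdisj hunion hcut hchoose hji.symm
  have := mms_union_le_add (d := 2) hsub h0 (I.val_mono i) (I.cutChooseAlloc C i)
    (I.cutChooseAlloc C j)
  linarith

end CutAndChoose

end GraphInstance

theorem stmt19_general {n : ℕ} {E : Type} [Fintype E] [DecidableEq E]
    (I : GraphInstance (Fin n) E) (hsub : ∀ i, IsSubadditiveVal (I.val i)) :
    ∃ X : Fin n → Finset E, IsOrientation I X ∧
      ∀ i, (1 / 2 : ℝ) * pmmsVal I X i ≤ I.val i (X i) := by
  choose C K hdisj hunion hcut hchoose using fun a b : Fin n =>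
    exists_cut_and_choose (I.val_nonneg a) (I.val_mono a) (I.val b) (I.itemsBetween a b)
  refine ⟨I.cutChooseAlloc C, I.isOrientation_cutChooseAlloc C, fun i => ?_⟩
  have := I.pmmsVal_cutChooseAlloc_le (hsub i) hdisj hunion hcut hchoose
  linarith

/-- In every multi-graph instance with `n ≥ 2` subadditive agents,
there exists an orientation `X` with `v_i(X_i) ≥ (1/2)·PMMS_i(X)` for every agent `i`,
i.e., a `1/2`-PMMS orientation. -/
theorem stmt19 {n : ℕ} (hn : 2 ≤ n) {E : Type} [Fintype E] [DecidableEq E]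
    (I : GraphInstance (Fin n) E) (hsub : ∀ i, IsSubadditiveVal (I.val i)) :
    ∃ X : Fin n → Finset E, IsOrientation I X ∧
      ∀ i, (1 / 2 : ℝ) * pmmsVal I X i ≤ I.val i (X i) :=
  stmt19_general I hsub
end
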